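/- Let G be a variable-regular Tanner graph with variable degree d_v = 3 and girth g ≥ 6, and let S be a stopping set whose induced subgraph contains a check node of degree 3 (i.e., S is a non-elementary stopping set witnessed by a degree-3 check node). Then |S| ≥ 5. -/

import Mathlib

/-- Degree of a variable node `v` in the Tanner graph given by adjacency `adj`. -/
def varDeg {V C : Type*} [Fintype C] (adj : V → C → Prop) [∀ v c, Decidable (adj v c)] (v : V) : ℕ :=
  (Finset.univ.filter (fun c => adj v c)).card

/-- Degree of a check node `c` in the subgraph induced by the set `S` of variable nodes. -/
def chkDeg {V C : Type*} [DecidableEq V] (adj : V → C → Prop) [∀ v c, Decidable (adj v c)]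
    (S : Finset V) (c : C) : ℕ :=
  (S.filter (fun v => adj v c)).card

/-- The set of check nodes of odd degree in the subgraph induced by `S`. -/
def oddChks {V C : Type*} [DecidableEq V] [Fintype C] (adj : V → C → Prop) [∀ v c, Decidable (adj v c)]
    (S : Finset V) : Finset C :=
  Finset.univ.filter (fun c => Odd (chkDeg adj S c))

/-- The Tanner graph of the adjacency relation `adj`, as a simple graph on `V ⊕ C`. -/
def tanner {V C : Type*} (adj : V → C → Prop) : SimpleGraph (V ⊕ C) where
  Adj x y := (∃ v c, x = Sum.inl v ∧ y = Sum.inr c ∧ adj v c) ∨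
    (∃ v c, x = Sum.inr c ∧ y = Sum.inl v ∧ adj v c)
  symm := by
    refine ⟨?_⟩; rintro x y (⟨v, c, h1, h2, h3⟩ | ⟨v, c, h1, h2, h3⟩)
    · exact Or.inr ⟨v, c, h2, h1, h3⟩
    · exact Or.inl ⟨v, c, h2, h1, h3⟩
  loopless := by
    refine ⟨?_⟩; rintro x (⟨v, c, h1, h2, _⟩ | ⟨v, c, h1, h2, _⟩) <;> subst h1 <;> simp at h2

/-!
The three neighbours of `w` in `S` have six further checks, pairwise distinct because the girth
is at least 6. Each of them needs a second neighbour in `S`, which, again by the girth bound, is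
not a neighbour of `w`. The remaining variables of `S` supply only three checks each, so there are
at least two of them.
-/

section TannerGraph

variable {V C : Type*} {adj : V → C → Prop}

theorem tanner_adj_inl_inr {v : V} {c : C} (h : adj v c) : (tanner adj).Adj (.inl v) (.inr c) :=
  Or.inl ⟨v, c, rfl, rfl, h⟩

theorem eq_of_adj_of_adj_of_six_le_egirth (hgirth : (6 : ℕ∞) ≤ (tanner adj).egirth)
    {v v' : V} {c c' : C} (hvv : v ≠ v') (hvc : adj v c) (hvc' : adj v c')
    (hv'c : adj v' c) (hv'c' : adj v' c') : c = c' := by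
  by_contra hcc
  let W : (tanner adj).Walk (.inl v) (.inl v) :=
    .cons (tanner_adj_inl_inr hvc) <| .cons (tanner_adj_inl_inr hv'c).symm <|
      .cons (tanner_adj_inl_inr hv'c') <| .cons (tanner_adj_inl_inr hvc').symm .nil
  have hW : W.IsCycle := by
    simp [W, SimpleGraph.Walk.isCycle_def, SimpleGraph.Walk.isTrail_def, hvv, hcc, Ne.symm hvv]
  have h6 := SimpleGraph.le_egirth.mp hgirth _ W hW
  norm_num [W] at h6

variable [∀ v c, Decidable (adj v c)]

section

variable [DecidableEq V]

theorem exists_ne_adj_of_chkDeg_ne_one {S : Finset V} {c : C} (hc : chkDeg adj S c ≠ 1)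
    {x : V} (hx : x ∈ S) (hxc : adj x c) : ∃ u ∈ S, u ≠ x ∧ adj u c := by
  have hpos : 0 < chkDeg adj S c := Finset.card_pos.mpr ⟨x, Finset.mem_filter.mpr ⟨hx, hxc⟩⟩
  obtain ⟨u, hu, hux⟩ := Finset.exists_mem_ne (by omega : 1 < chkDeg adj S c) x
  exact ⟨u, (Finset.mem_filter.mp hu).1, hux, (Finset.mem_filter.mp hu).2⟩

theorem exists_adj_not_adj_of_chkDeg_ne_one (hgirth : (6 : ℕ∞) ≤ (tanner adj).egirth)
    {S : Finset V} {c w : C} (hc : chkDeg adj S c ≠ 1) (hcw : c ≠ w)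
    {x : V} (hx : x ∈ S) (hxc : adj x c) (hxw : adj x w) : ∃ u ∈ S, ¬ adj u w ∧ adj u c := by
  obtain ⟨u, hu, hux, huc⟩ := exists_ne_adj_of_chkDeg_ne_one hc hx hxc
  refine ⟨u, hu, fun huw => hcw ?_, huc⟩
  exact eq_of_adj_of_adj_of_six_le_egirth hgirth hux huc huw hxc hxw

end

variable [Fintype C]

variable (adj) in
def checkNeighbors (v : V) : Finset C :=
  Finset.univ.filter (adj v ·)

theorem card_checkNeighbors (v : V) : (checkNeighbors adj v).card = varDeg adj v := rfl

theorem pairwiseDisjoint_erase_checkNeighbors [DecidableEq C]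
    (hgirth : (6 : ℕ∞) ≤ (tanner adj).egirth) (w : C) :
    {x | adj x w}.PairwiseDisjoint fun x => (checkNeighbors adj x).erase w := by
  intro x hxw y hyw hxy
  refine Finset.disjoint_left.mpr fun c hcx hcy => Finset.ne_of_mem_erase hcx ?_
  simp only [checkNeighbors, Finset.mem_erase, Finset.mem_filter, Finset.mem_univ, true_and]
    at hcx hcy
  exact eq_of_adj_of_adj_of_six_le_egirth hgirth hxy hcx.2 hxw hcy.2 hyw

theorem chkDeg_mul_pred_le [DecidableEq V] (hgirth : (6 : ℕ∞) ≤ (tanner adj).egirth) {d : ℕ}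
    (hreg : ∀ v, varDeg adj v = d) {S : Finset V} (hstop : ∀ c, chkDeg adj S c ≠ 1) (w : C) :
    chkDeg adj S w * (d - 1) ≤ d * (S.filter (¬ adj · w)).card := by
  classical
  set N := S.filter (adj · w)
  set R := S.filter (¬ adj · w)
  have hcover : N.biUnion (fun x => (checkNeighbors adj x).erase w) ⊆
      R.biUnion (checkNeighbors adj) := by
    intro c hc
    obtain ⟨x, hxN, hcx⟩ := Finset.mem_biUnion.mp hc
    obtain ⟨hcw, hxc⟩ := by simpa [checkNeighbors] using hcx
    obtain ⟨hx, hxw⟩ := Finset.mem_filter.mp hxN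
    obtain ⟨u, hu, huw, huc⟩ :=
      exists_adj_not_adj_of_chkDeg_ne_one hgirth (hstop c) hcw hx hxc hxw
    exact Finset.mem_biUnion.mpr ⟨u, Finset.mem_filter.mpr ⟨hu, huw⟩, by simpa [checkNeighbors]⟩
  calc chkDeg adj S w * (d - 1)
      = ∑ x ∈ N, ((checkNeighbors adj x).erase w).card := by
        refine (Finset.sum_const_nat fun x hx => ?_).symm
        have hwx : w ∈ checkNeighbors adj x := by
          simpa [checkNeighbors] using (Finset.mem_filter.mp hx).2
        rw [Finset.card_erase_of_mem hwx, card_checkNeighbors, hreg]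
    _ = (N.biUnion fun x => (checkNeighbors adj x).erase w).card :=
        (Finset.card_biUnion ((pairwiseDisjoint_erase_checkNeighbors hgirth w).subset
          fun x hx => (Finset.mem_filter.mp hx).2)).symm
    _ ≤ (R.biUnion (checkNeighbors adj)).card := Finset.card_le_card hcover
    _ ≤ ∑ u ∈ R, (checkNeighbors adj u).card := Finset.card_biUnion_le
    _ = d * R.card := by simp [card_checkNeighbors, hreg, mul_comm]

end TannerGraph

/-- In a variable-regular Tanner graph with variable degree 3 and girth ≥ 6,
every stopping set `S` (no degree-1 check node in `G(S)`) whose induced subgraph contains a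
check node of degree 3 satisfies `|S| ≥ 5`. -/
theorem ness_size_ge_five {V C : Type*} [Fintype C] [DecidableEq V]
    (adj : V → C → Prop) [∀ v c, Decidable (adj v c)]
    (hreg : ∀ v : V, varDeg adj v = 3)
    (hgirth : (6 : ℕ∞) ≤ (tanner adj).egirth)
    (S : Finset V) (hstop : ∀ c : C, chkDeg adj S c ≠ 1)
    (w : C) (hw : chkDeg adj S w = 3) :
    5 ≤ S.card := by
  have hcount := chkDeg_mul_pred_le hgirth hreg hstop w
  have hsplit : chkDeg adj S w + (S.filter (¬ adj · w)).card = S.card :=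
    Finset.card_filter_add_card_filter_not _
  omega
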